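/- Let H ⊆ 2^V \ {∅} be a hypergraph and x a position of the hypergraph Nim game. If H₀ ∈ H and x → a, x → b are both H₀-moves with a ≤ b componentwise, then every c ∈ ℤ≥0^V with a ≤ c ≤ b is also reachable from x by an H₀-move, and the set of heights {h(c) : a ≤ c ≤ b} equals the full integer interval [h(a), h(b)]. -/

import Mathlib

/-- A move in hypergraph Nim: choose an edge `E ∈ H`, strictly decrease all
coordinates in `E`, leave all other coordinates unchanged. -/
def Move {V : Type*} (H : Set (Set V)) (x x' : V → ℕ) : Prop :=
  ∃ E ∈ H, (∀ i ∈ E, x' i < x i) ∧ ∀ i ∉ E, x' i = x i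

/-- The height of a position: the maximum number of consecutive moves from `x`. -/
noncomputable def height {V : Type*} (H : Set (Set V)) (x : V → ℕ) : ℕ :=
  sSup {n : ℕ | ∃ f : ℕ → V → ℕ, f 0 = x ∧ ∀ i < n, Move H (f i) (f (i + 1))}

/-!
Raising one coordinate by one raises the height by at most one: a play from `x + eⱼ` either
makes its first move below `x`, or leaves coordinate `j` alone, and then it is a play from `x`
carrying the extra token along. Together with monotonicity of the height, walking from `a` to `b`
one unit at a time passes through every height between `h(a)` and `h(b)`. Reachability of `c`
is immediate from `a ≤ c ≤ b` coordinatewise.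
-/

open Function

section DiscreteIVT

variable {ι : Type*} [Fintype ι] [DecidableEq ι] {f : (ι → ℕ) → ℕ}

theorem exists_mem_Icc_eq_of_update_succ_le
    (hstep : ∀ x j, f (update x j (x j + 1)) ≤ f x + 1)
    {a b : ι → ℕ} (hab : a ≤ b) {t : ℕ} (hat : f a ≤ t) (htb : t ≤ f b) :
    ∃ c ∈ Set.Icc a b, f c = t := by
  rcases hat.eq_or_lt with rfl | hlt
  · exact ⟨a, ⟨le_rfl, hab⟩, rfl⟩
  obtain ⟨j, hj⟩ : ∃ j, a j < b j := by
    by_contra! hba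
    exact (htb.trans_lt (le_antisymm hab hba ▸ hlt)).false
  have haa' : a ≤ update a j (a j + 1) := le_update_self_iff.2 (Nat.le_succ _)
  have ha'b : update a j (a j + 1) ≤ b := update_le_iff.2 ⟨hj, fun i _ => hab i⟩
  obtain ⟨c, hc, rfl⟩ :=
    exists_mem_Icc_eq_of_update_succ_le hstep ha'b ((hstep a j).trans hlt) htb
  exact ⟨c, ⟨haa'.trans hc.1, hc.2⟩, rfl⟩
termination_by ∑ i, (b i - a i)
decreasing_by
  exact Finset.sum_lt_sum (fun i _ => Nat.sub_le_sub_left (haa' i) _)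
    ⟨j, Finset.mem_univ j, by simp only [update_self]; omega⟩

theorem Monotone.image_Icc_eq_of_update_succ_le (hf : Monotone f)
    (hstep : ∀ x j, f (update x j (x j + 1)) ≤ f x + 1)
    {a b : ι → ℕ} (hab : a ≤ b) : f '' Set.Icc a b = Set.Icc (f a) (f b) :=
  hf.image_Icc_subset.antisymm fun _ ht =>
    exists_mem_Icc_eq_of_update_succ_le hstep hab ht.1 ht.2

end DiscreteIVT

section Height

variable {V : Type*} {H : Set (Set V)}

def playLengths (H : Set (Set V)) (x : V → ℕ) : Set ℕ :=
  {n | ∃ f : ℕ → V → ℕ, f 0 = x ∧ ∀ i < n, Move H (f i) (f (i + 1))}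

theorem height_eq_sSup_playLengths (x : V → ℕ) : height H x = sSup (playLengths H x) := rfl

theorem zero_mem_playLengths (x : V → ℕ) : 0 ∈ playLengths H x :=
  ⟨fun _ => x, rfl, nofun⟩

theorem succ_mem_playLengths_iff {x : V → ℕ} {n : ℕ} :
    n + 1 ∈ playLengths H x ↔ ∃ y, Move H x y ∧ n ∈ playLengths H y := by
  constructor
  · rintro ⟨f, rfl, hf⟩
    exact ⟨f 1, hf 0 n.succ_pos, fun i => f (i + 1), rfl, fun i hi => hf (i + 1) (by omega)⟩
  · rintro ⟨y, hxy, g, rfl, hg⟩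
    refine ⟨fun i => Nat.casesOn i x g, rfl, fun i hi => ?_⟩
    cases i with
    | zero => exact hxy
    | succ i => exact hg i (by omega)

theorem Move.exists_move_ge_of_le {a c y : V → ℕ} (hay : Move H a y) (hac : a ≤ c) :
    ∃ y', Move H c y' ∧ y ≤ y' := by
  classical
  obtain ⟨E, hE, hlt, heq⟩ := hay
  refine ⟨fun i => if i ∈ E then y i else c i, ⟨E, hE, fun i hi => ?_, fun i hi => ?_⟩,
    fun i => ?_⟩
  · simpa [hi] using (hlt i hi).trans_le (hac i)
  · simp [hi]
  · by_cases hi : i ∈ E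
    · simp [hi]
    · simpa [hi, heq i hi] using hac i

theorem playLengths_mono {a c : V → ℕ} (hac : a ≤ c) : playLengths H a ⊆ playLengths H c := by
  intro n
  induction n generalizing a c with
  | zero => exact fun _ => zero_mem_playLengths c
  | succ n ih =>
    rw [succ_mem_playLengths_iff, succ_mem_playLengths_iff]
    rintro ⟨y, hay, hy⟩
    obtain ⟨y', hcy', hyy'⟩ := hay.exists_move_ge_of_le hac
    exact ⟨y', hcy', ih hyy' hy⟩

theorem Move.le_or_eq_update_of_update_succ [DecidableEq V] {x y : V → ℕ} {j : V}
    (h : Move H (update x j (x j + 1)) y) :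
    y ≤ x ∨ ∃ y₀, Move H x y₀ ∧ y = update y₀ j (y₀ j + 1) := by
  obtain ⟨E, hE, hlt, heq⟩ := h
  by_cases hj : j ∈ E
  · left
    intro i
    rcases eq_or_ne i j with rfl | hij
    · simpa using hlt i hj
    by_cases hi : i ∈ E
    · simpa [hij] using (hlt i hi).le
    · simpa [hij] using (heq i hi).le
  · right
    have hyj : y j = x j + 1 := by simpa using heq j hj
    refine ⟨update y j (x j), ⟨E, hE, fun i hi => ?_, fun i hi => ?_⟩, ?_⟩
    · have hij : i ≠ j := ne_of_mem_of_not_mem hi hj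
      simpa [hij] using hlt i hi
    · rcases eq_or_ne i j with rfl | hij
      · simp
      · simpa [hij] using heq i hi
    · simp [← hyj]

theorem mem_playLengths_of_succ_mem_update [DecidableEq V] {x : V → ℕ} {j : V} {n : ℕ}
    (hn : n + 1 ∈ playLengths H (update x j (x j + 1))) : n ∈ playLengths H x := by
  induction n generalizing x with
  | zero => exact zero_mem_playLengths x
  | succ n ih =>
    obtain ⟨y, hxy, hy⟩ := succ_mem_playLengths_iff.1 hn
    rcases hxy.le_or_eq_update_of_update_succ with hyx | ⟨y₀, hxy₀, rfl⟩
    · exact playLengths_mono hyx hy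
    · exact succ_mem_playLengths_iff.2 ⟨y₀, hxy₀, ih hy⟩

theorem Move.sum_lt [Fintype V] (hH : ∅ ∉ H) {x y : V → ℕ} (h : Move H x y) :
    ∑ i, y i < ∑ i, x i := by
  obtain ⟨E, hE, hlt, heq⟩ := h
  obtain ⟨j, hj⟩ := Set.nonempty_iff_ne_empty.2 fun h => hH (h ▸ hE)
  refine Finset.sum_lt_sum (fun i _ => ?_) ⟨j, Finset.mem_univ j, hlt j hj⟩
  by_cases hi : i ∈ E
  · exact (hlt i hi).le
  · exact (heq i hi).le

theorem le_sum_of_mem_playLengths [Fintype V] (hH : ∅ ∉ H) {x : V → ℕ} {n : ℕ}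
    (hn : n ∈ playLengths H x) : n ≤ ∑ i, x i := by
  induction n generalizing x with
  | zero => exact Nat.zero_le _
  | succ n ih =>
    obtain ⟨y, hxy, hy⟩ := succ_mem_playLengths_iff.1 hn
    exact (ih hy).trans_lt (hxy.sum_lt hH)

theorem bddAbove_playLengths [Fintype V] (hH : ∅ ∉ H) (x : V → ℕ) :
    BddAbove (playLengths H x) :=
  ⟨_, fun _ => le_sum_of_mem_playLengths hH⟩

/-- With the empty edge one can pass forever, so every play length is attained and the `sSup`
defining the height takes its junk value `0`. -/
theorem height_eq_zero_of_empty_mem (hH : ∅ ∈ H) (x : V → ℕ) : height H x = 0 := by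
  have hpass : Move H x x := ⟨∅, hH, nofun, fun _ _ => rfl⟩
  have huniv : playLengths H x = Set.univ :=
    Set.eq_univ_of_forall fun _ => ⟨fun _ => x, rfl, fun _ _ => hpass⟩
  rw [height_eq_sSup_playLengths, huniv, csSup_of_not_bddAbove not_bddAbove_univ, csSup_empty]
  rfl

theorem height_monotone [Fintype V] : Monotone (height H) := by
  intro a c hac
  by_cases hH : ∅ ∈ H
  · simp [height_eq_zero_of_empty_mem hH]
  exact csSup_le_csSup (bddAbove_playLengths hH c) ⟨0, zero_mem_playLengths a⟩
    (playLengths_mono hac)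

theorem height_update_succ_le [Fintype V] [DecidableEq V] (x : V → ℕ) (j : V) :
    height H (update x j (x j + 1)) ≤ height H x + 1 := by
  by_cases hH : ∅ ∈ H
  · simp [height_eq_zero_of_empty_mem hH]
  refine csSup_le ⟨0, zero_mem_playLengths _⟩ fun n hn => ?_
  cases n with
  | zero => exact Nat.zero_le _
  | succ n => exact Nat.succ_le_succ <|
      le_csSup (bddAbove_playLengths hH x) (mem_playLengths_of_succ_mem_update hn)

end Height

theorem stmt_8_general {V : Type*} [Fintype V] (H : Set (Set V)) (H₀ : Set V)
    (x a b : V → ℕ)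
    (ha : (∀ i ∈ H₀, a i < x i) ∧ ∀ i ∉ H₀, a i = x i)
    (hb : (∀ i ∈ H₀, b i < x i) ∧ ∀ i ∉ H₀, b i = x i)
    (hab : a ≤ b) :
    (∀ c : V → ℕ, a ≤ c → c ≤ b →
        (∀ i ∈ H₀, c i < x i) ∧ ∀ i ∉ H₀, c i = x i) ∧
    height H '' Set.Icc a b = Set.Icc (height H a) (height H b) := by
  classical
  refine ⟨fun c hac hcb => ⟨fun i hi => (hcb i).trans_lt (hb.1 i hi), fun i hi => ?_⟩,
    height_monotone.image_Icc_eq_of_update_succ_le height_update_succ_le hab⟩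
  exact le_antisymm ((hcb i).trans (hb.2 i hi).le) ((ha.2 i hi).ge.trans (hac i))

/-- Contiguity Lemma: if `x → a` and `x → b` are `H₀`-moves with `a ≤ b`, then
every `c` with `a ≤ c ≤ b` is reachable from `x` by an `H₀`-move, and the set of
heights of such `c` is the full interval `[h(a), h(b)]`. -/
theorem stmt_8 {V : Type*} [Fintype V] (H : Set (Set V)) (H₀ : Set V) (hH₀ : H₀ ∈ H)
    (x a b : V → ℕ)
    (ha : (∀ i ∈ H₀, a i < x i) ∧ ∀ i ∉ H₀, a i = x i)
    (hb : (∀ i ∈ H₀, b i < x i) ∧ ∀ i ∉ H₀, b i = x i)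
    (hab : a ≤ b) :
    (∀ c : V → ℕ, a ≤ c → c ≤ b →
        (∀ i ∈ H₀, c i < x i) ∧ ∀ i ∉ H₀, c i = x i) ∧
    height H '' Set.Icc a b = Set.Icc (height H a) (height H b) :=
  stmt_8_general H H₀ x a b ha hb hab
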